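/- Combined product bijection: under the same assumptions, the map α ↦ ((α_i)_{i∈N}, (α_i)_{i∈Δ}) is a bijection between Σ_{N,n}(d,k) = {α ∈ Σ(d,k) : N(α)=N, n(α)=n} and the product Σ(N,n) × Σ_0^{(q)}(Δ, k−n). -/
import Mathlib


/-- `N(α) = N`: `N` is the unique subset of `{0,...,d}` of maximal cardinality with
`∑_{i∈N} α i ≤ r (card N)` (with `N = ∅` allowed). -/
def isNset (d : ℕ) (r : ℕ → ℕ) (α : Fin (d + 1) → ℕ) (N : Finset (Fin (d + 1))) : Prop :=
  (N = ∅ ∨ ∑ i ∈ N, α i ≤ r N.card) ∧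
  ∀ M : Finset (Fin (d + 1)), N.card < M.card → M.card ≤ d → r M.card < ∑ i ∈ M, α i

/-- `Σ_0^{(q)}(Δ, m)`: functions supported on `Δ` with entries summing to `m` such that every
nonempty proper subset `M ⊆ Δ` of size `t` has entry sum `> q t`. -/
def sigmaZero (d : ℕ) (q : ℕ → ℕ) (Δ : Finset (Fin (d + 1))) (m : ℕ) :
    Set (Fin (d + 1) → ℕ) :=
  {β | (∀ i ∉ Δ, β i = 0) ∧ ∑ i ∈ Δ, β i = m ∧
    ∀ M ⊆ Δ, M.Nonempty → M ⊂ Δ → q M.card < ∑ i ∈ M, β i}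

private lemma rmono' (d : ℕ) (r : ℕ → ℕ)
    (hr : ∀ s, 1 ≤ s → s + 1 ≤ d → 2 * r s ≤ r (s + 1)) :
    ∀ a b, 1 ≤ a → a ≤ b → b ≤ d → r a ≤ r b := by
  intro a b ha hab hbd
  induction b with
  | zero => omega
  | succ b ih =>
    rcases Nat.lt_or_ge a (b + 1) with h | h
    · have h1 := hr b (by omega) (by omega)
      have h2 := ih (by omega) (by omega)
      omega
    · have : a = b + 1 := by omega
      subst this; exact le_refl _

/-- Combined product bijection: `α ↦ ((α_i)_{i∈N}, (α_i)_{i∈Δ})` is a bijection between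
`Σ_{N,n}(d,k)` and the product `Σ(N,n) × Σ_0^{(q)}(Δ, k−n)`, with `Δ = Nᶜ` and
`q t = r (t + card N) − n`. -/
theorem restriction_product_bijection (d k : ℕ) (r : ℕ → ℕ)
    (hr : ∀ s, 1 ≤ s → s + 1 ≤ d → 2 * r s ≤ r (s + 1)) (hk : 2 * r d + 1 ≤ k)
    (N : Finset (Fin (d + 1))) (hN : N ⊂ Finset.univ)
    (n : ℕ) (hn : n ≤ r N.card) :
    Set.BijOn
      (fun α => ((fun i => if i ∈ N then α i else 0 : Fin (d + 1) → ℕ),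
                 (fun i => if i ∈ Nᶜ then α i else 0 : Fin (d + 1) → ℕ)))
      {α : Fin (d + 1) → ℕ | ∑ i, α i = k ∧ isNset d r α N ∧ ∑ i ∈ N, α i = n}
      ({θ : Fin (d + 1) → ℕ | (∀ i ∉ N, θ i = 0) ∧ ∑ i ∈ N, θ i = n} ×ˢ
        sigmaZero d (fun t => r (t + N.card) - n) Nᶜ (k - n)) := by
  have hmono := rmono' d r hr
  have hNd : N.card ≤ d := by
    have := Finset.card_lt_card hN
    simpa [Finset.card_univ] using Nat.lt_succ_iff.mp (by simpa using this)
  have hcompl : Nᶜ.card = d + 1 - N.card := by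
    simp [Finset.card_compl]
  -- n ≤ r d (or n = 0 when N = ∅)
  have hnrd : n ≤ r d ∨ N = ∅ := by
    rcases Nat.eq_zero_or_pos N.card with h0 | h1
    · exact Or.inr (Finset.card_eq_zero.mp h0)
    · exact Or.inl (le_trans hn (hmono N.card d h1 hNd le_rfl))
  refine ⟨?_, ?_, ?_⟩
  · -- MapsTo
    rintro α ⟨hsum, ⟨hNs1, hNs2⟩, hnα⟩
    have hsplit : ∑ i ∈ N, α i + ∑ i ∈ Nᶜ, α i = k := by
      rw [Finset.sum_add_sum_compl]; exact hsum
    have hnk : n ≤ k := by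
      rcases hnrd with h | h
      · omega
      · subst h; simp at hnα; omega
    constructor
    · refine ⟨fun i hi => if_neg hi, ?_⟩
      rw [← hnα]
      exact Finset.sum_congr rfl fun i hi => if_pos hi
    · refine ⟨fun i hi => if_neg hi, ?_, ?_⟩
      · have : ∑ i ∈ Nᶜ, (if i ∈ Nᶜ then α i else 0) = ∑ i ∈ Nᶜ, α i :=
          Finset.sum_congr rfl fun i hi => if_pos hi
        rw [this]; omega
      · intro M hMsub hMne hMss
        have hsameM : ∑ i ∈ M, (if i ∈ Nᶜ then α i else 0) = ∑ i ∈ M, α i :=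
          Finset.sum_congr rfl fun i hi => if_pos (hMsub hi)
        rw [hsameM]
        have hdisj : Disjoint N M := by
          refine Finset.disjoint_left.mpr fun i hiN hiM => ?_
          have := hMsub hiM; simp at this; exact this hiN
        have hcard : (N ∪ M).card = N.card + M.card := Finset.card_union_of_disjoint hdisj
        have hMlt : M.card < Nᶜ.card := Finset.card_lt_card hMss
        have h1 : N.card < (N ∪ M).card := by
          have := Finset.card_pos.mpr hMne; omega
        have h2 : (N ∪ M).card ≤ d := by omega
        have hkey := hNs2 (N ∪ M) h1 h2
        rw [Finset.sum_union hdisj, hnα, hcard] at hkey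
        have hnle : n ≤ r (N.card + M.card) := by
          rcases Nat.eq_zero_or_pos N.card with h0 | hpos
          · have : N = ∅ := Finset.card_eq_zero.mp h0
            subst this; simp at hnα; omega
          · exact le_trans hn (hmono N.card (N.card + M.card) hpos (by omega) (by omega))
        have hcomm : r (M.card + N.card) = r (N.card + M.card) := by rw [Nat.add_comm]
        simp only []
        omega
  · -- InjOn
    intro a _ b _ h
    have h1 := congrArg Prod.fst h
    have h2 := congrArg Prod.snd h
    simp only at h1 h2
    funext i
    by_cases hi : i ∈ N
    · have := congrFun h1 i; simpa [hi] using this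
    · have := congrFun h2 i; simpa [hi] using this
  · -- SurjOn
    rintro ⟨θ, β⟩ ⟨⟨hθ0, hθn⟩, hβ0, hβsum, hβcond⟩
    simp only at hθ0 hθn hβ0 hβsum hβcond
    set α : Fin (d + 1) → ℕ := fun i => θ i + β i with hα
    have hβN : ∀ i ∈ N, β i = 0 := fun i hi => hβ0 i (by simp [hi])
    have hθC : ∀ i ∈ Nᶜ, θ i = 0 := fun i hi => hθ0 i (by simpa using hi)
    have hsumN : ∑ i ∈ N, α i = n := by
      rw [hα]
      rw [Finset.sum_add_distrib, hθn, Finset.sum_eq_zero hβN]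
      omega
    have hnk : n ≤ k := by
      rcases hnrd with h | h
      · omega
      · subst h; simp at hθn; omega
    have hsumC : ∑ i ∈ Nᶜ, α i = k - n := by
      rw [hα, Finset.sum_add_distrib, Finset.sum_eq_zero hθC, hβsum]
      omega
    have hsrc : α ∈ {α : Fin (d + 1) → ℕ | ∑ i, α i = k ∧ isNset d r α N ∧ ∑ i ∈ N, α i = n} := by
      refine ⟨?_, ⟨Or.inr (by rw [hsumN]; exact hn), ?_⟩, hsumN⟩
      · rw [← Finset.sum_add_sum_compl N α, hsumN, hsumC]; omega
      · intro M hlt hMd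
        set M₁ := M ∩ N with hM₁
        set M₂ := M ∩ Nᶜ with hM₂
        have hMun : M₁ ∪ M₂ = M := by
          rw [hM₁, hM₂, ← Finset.inter_union_distrib_left, Finset.union_compl,
            Finset.inter_univ]
        have hdisj12 : Disjoint M₁ M₂ := by
          refine Finset.disjoint_left.mpr fun i hi1 hi2 => ?_
          simp [hM₁, hM₂] at hi1 hi2
          exact hi2.2 hi1.2
        have hcards : M₁.card + M₂.card = M.card := by
          rw [← Finset.card_union_of_disjoint hdisj12, hMun]
        have hM₁N : M₁ ⊆ N := Finset.inter_subset_right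
        have hM₁le : M₁.card ≤ N.card := Finset.card_le_card hM₁N
        have hM₂ne : M₂.Nonempty := by
          rw [← Finset.card_pos]; omega
        have hsumsplit : ∑ i ∈ M, α i = ∑ i ∈ M₁, θ i + ∑ i ∈ M₂, β i := by
          rw [← hMun, Finset.sum_union hdisj12, hα]
          simp only [Finset.sum_add_distrib]
          have e1 : ∑ i ∈ M₁, β i = 0 := Finset.sum_eq_zero fun i hi => hβN i (hM₁N hi)
          have e2 : ∑ i ∈ M₂, θ i = 0 :=
            Finset.sum_eq_zero fun i hi => hθC i (Finset.inter_subset_right hi)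
          omega
        have hM₂sub : M₂ ⊆ Nᶜ := Finset.inter_subset_right
        rcases eq_or_ne M₂ Nᶜ with hMeq | hMne
        · -- M₂ = Nᶜ
          have hS : ∑ i ∈ M₂, β i = k - n := by rw [hMeq, hβsum]
          have hrM : r M.card ≤ r d := hmono M.card d (by omega) hMd le_rfl
          have hnd : n ≤ r d := by
            rcases hnrd with h | h
            · exact h
            · subst h; simp at hθn; omega
          rw [hsumsplit]
          omega
        · -- M₂ ⊊ Nᶜ
          have hss : M₂ ⊂ Nᶜ := lt_of_le_of_ne hM₂sub hMne
          have hkey := hβcond M₂ hM₂sub hM₂ne hss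
          have hM₂lt : M₂.card < Nᶜ.card := Finset.card_lt_card hss
          have htd : M₂.card + N.card ≤ d := by omega
          have hnle : n ≤ r (M₂.card + N.card) := by
            rcases Nat.eq_zero_or_pos N.card with h0 | hpos
            · have : N = ∅ := Finset.card_eq_zero.mp h0
              subst this; simp at hθn; omega
            · exact le_trans hn (hmono N.card (M₂.card + N.card) hpos (by omega) htd)
          rw [hsumsplit]
          rcases eq_or_ne M₁ N with hM1eq | hM1ne
          · -- M₁ = N
            have hθ1 : ∑ i ∈ M₁, θ i = n := by rw [hM1eq]; exact hθn
            have hc1 : M₁.card = N.card := by rw [hM1eq]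
            have hcM : M.card = M₂.card + N.card := by omega
            have hrMeq : r M.card = r (M₂.card + N.card) := by rw [hcM]
            omega
          · -- M₁ ⊊ N
            have hM1lt : M₁.card < N.card :=
              Finset.card_lt_card (lt_of_le_of_ne hM₁N hM1ne)
            have hNpos : 1 ≤ N.card := by omega
            have ht : M₂.card + N.card - 1 ≥ 1 := by omega
            have hrM : r M.card ≤ r (M₂.card + N.card - 1) :=
              hmono M.card (M₂.card + N.card - 1) (by omega) (by omega) (by omega)
            have hrn : n ≤ r (M₂.card + N.card - 1) :=
              le_trans hn (hmono N.card (M₂.card + N.card - 1) hNpos (by omega) (by omega))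
            have hdbl : 2 * r (M₂.card + N.card - 1) ≤ r (M₂.card + N.card) := by
              have := hr (M₂.card + N.card - 1) ht (by omega)
              have he : M₂.card + N.card - 1 + 1 = M₂.card + N.card := by omega
              rwa [he] at this
            omega
    refine ⟨α, hsrc, ?_⟩
    simp only [Prod.mk.injEq]
    constructor
    · funext i
      by_cases hi : i ∈ N
      · simp [hi, hα, hβN i hi]
      · simp only [hα, if_neg hi]
        exact (hθ0 i hi).symm
    · funext i
      by_cases hi : i ∈ Nᶜ
      · simp [hi, hα, hθC i hi]
      · have hiN : i ∈ N := by simpa using hi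
        simp [hi, hα, hβN i hiN, hβ0 i (by simpa using hi)]
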